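/- arXiv:1404.3791 — 3 statements merged into one kernel-verified Lean document; each statement's English description precedes it below -/
import Mathlib

section
/- Let M be a totally umbilical submanifold tangent to ξ of a Kenmotsu manifold with mean curvature vector H. Then g(X, ξ)H = 0 for all X tangent to M; in particular, η(X)·H = 0, so H = 0 (i.e., M is totally geodesic) whenever some tangent X has η(X) ≠ 0 acting pointwise. -/
open Real

section Preamble

variable (C V : Type*) [CommRing C] [Algebra ℝ C] [AddCommGroup V] [Module C V]

/-- An almost contact metric structure `(g, φ, ξ, η)` on the module `V` of vector fields
of the ambient manifold, with scalar functions valued in the `ℝ`-algebra `C`. -/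
structure ACMS where
  g : V → V → C
  phi : V → V
  xi : V
  eta : V → C
  g_symm : ∀ X Y, g X Y = g Y X
  g_addl : ∀ X Y Z, g (X + Y) Z = g X Z + g Y Z
  g_smull : ∀ (a : C) (X Y : V), g (a • X) Y = a * g X Y
  g_nondeg : ∀ X, (∀ Y, g X Y = 0) → X = 0
  phi_add : ∀ X Y, phi (X + Y) = phi X + phi Y
  phi_smul : ∀ (a : C) (X : V), phi (a • X) = a • phi X
  phi_sq : ∀ X, phi (phi X) = -X + eta X • xi
  eta_xi : eta xi = 1
  phi_xi : phi xi = 0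
  eta_phi : ∀ X, eta (phi X) = 0
  g_phiphi : ∀ X Y, g (phi X) (phi Y) = g X Y - eta X * eta Y
  eta_def : ∀ X, eta X = g X xi

/-- A Kenmotsu manifold: an almost contact metric structure together with its Levi-Civita
connection `nab` (with directional derivative `D` on functions) satisfying
`(∇̄_X φ)Y = g(φX, Y)ξ - η(Y)φX` and `∇̄_X ξ = X - η(X)ξ`. -/
structure Kenmotsu extends ACMS C V where
  nab : V → V → V
  D : V → C → C
  compat : ∀ X Y Z, D X (g Y Z) = g (nab X Y) Z + g Y (nab X Z)
  kphi : ∀ X Y, nab X (phi Y) = phi (nab X Y) + g (phi X) Y • xi - eta Y • phi X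
  kxi : ∀ X, nab X xi = X - eta X • xi

variable {C V}

/-- A submanifold tangent to `ξ`: a submodule `TM` of tangent vector fields together with
the tangential/normal projections `tang`, `nor`. -/
structure Subm (S : ACMS C V) where
  TM : Submodule C V
  tang : V → V
  nor : V → V
  tang_mem : ∀ v, tang v ∈ TM
  decomp : ∀ v, tang v + nor v = v
  nor_orth : ∀ v, ∀ w ∈ TM, S.g (nor v) w = 0
  tang_of_mem : ∀ v ∈ TM, tang v = v
  xi_mem : S.xi ∈ TM

namespace Subm
variable {S : ACMS C V}

/-- The tangential part `T` of `φ`. -/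
def T (M : Subm S) : V → V := fun X => M.tang (S.phi X)

/-- The normal part `F` of `φ`. -/
def F (M : Subm S) : V → V := fun X => M.nor (S.phi X)

/-- `M` is slant with Wirtinger angle `θ`: for every tangent `X` not proportional to `ξ`,
the angle between `φX` and `TM` is `θ`, i.e. `‖TX‖² = cos²θ ‖φX‖²`. -/
def IsSlantAngle (M : Subm S) (θ : ℝ) : Prop :=
  θ ∈ Set.Icc 0 (π / 2) ∧ ∀ X ∈ M.TM, X ∉ Submodule.span C {S.xi} →
    S.g (M.T X) (M.T X) = algebraMap ℝ C ((Real.cos θ) ^ 2) * S.g (S.phi X) (S.phi X)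

/-- Slant via the characterization `T² = cos²θ(-I + η ⊗ ξ)` on `TM`. -/
def SlantT2 (M : Subm S) (θ : ℝ) : Prop :=
  ∀ X ∈ M.TM, M.T (M.T X) = algebraMap ℝ C ((Real.cos θ) ^ 2) • (-X + S.eta X • S.xi)

end Subm

/-- A submanifold of a Kenmotsu manifold with its induced connection `nabM`, second
fundamental form `h2`, shape operator `A` and normal connection `nabp`, satisfying the
Gauss and Weingarten formulas. -/
structure SubmK (K : Kenmotsu C V) extends Subm K.toACMS where
  nabM : V → V → V
  h2 : V → V → V
  A : V → V → V
  nabp : V → V → V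
  gauss : ∀ X ∈ TM, ∀ Y ∈ TM, K.nab X Y = nabM X Y + h2 X Y
  nabM_mem : ∀ X ∈ TM, ∀ Y ∈ TM, nabM X Y ∈ TM
  h2_nor : ∀ X ∈ TM, ∀ Y ∈ TM, ∀ w ∈ TM, K.g (h2 X Y) w = 0
  h2_symm : ∀ X Y, h2 X Y = h2 Y X
  wein : ∀ X ∈ TM, ∀ N : V, (∀ w ∈ TM, K.g N w = 0) → K.nab X N = -A N X + nabp X N
  A_mem : ∀ (N : V), ∀ X ∈ TM, A N X ∈ TM
  nabp_nor : ∀ X ∈ TM, ∀ N : V, (∀ w ∈ TM, K.g N w = 0) → ∀ w ∈ TM, K.g (nabp X N) w = 0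
  shape_rel : ∀ X ∈ TM, ∀ Y ∈ TM, ∀ N : V, K.g (h2 X Y) N = K.g (A N X) Y

namespace SubmK
variable {K : Kenmotsu C V}

/-- The tangential part `T` of `φ` (also the operator `t` on normal fields). -/
def T (M : SubmK K) : V → V := fun X => M.tang (K.phi X)

/-- The normal part `F` of `φ` (also the operator `f` on normal fields). -/
def F (M : SubmK K) : V → V := fun X => M.nor (K.phi X)

/-- Slant via the characterization `T² = cos²θ(-I + η ⊗ ξ)` on `TM`. -/
def SlantT2 (M : SubmK K) (θ : ℝ) : Prop :=
  ∀ X ∈ M.TM, M.T (M.T X) = algebraMap ℝ C ((Real.cos θ) ^ 2) • (-X + K.eta X • K.xi)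

/-- `M` is totally umbilical with (normal) mean curvature vector `H`:
`h(X, Y) = g(X, Y) H`. -/
def TotUmb (M : SubmK K) (H : V) : Prop :=
  (∀ w ∈ M.TM, K.g H w = 0) ∧ ∀ X ∈ M.TM, ∀ Y ∈ M.TM, M.h2 X Y = K.g X Y • H

/-- `H` lies in the `φ`-invariant normal subbundle `μ`, the orthogonal complement of
`F(TM)` in the normal bundle (so `H` and `φH` are normal and orthogonal to `F(TM)`). -/
def InMu (M : SubmK K) (H : V) : Prop :=
  (∀ w ∈ M.TM, K.g H w = 0) ∧ (∀ X ∈ M.TM, K.g H (M.F X) = 0) ∧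
  (∀ w ∈ M.TM, K.g (K.phi H) w = 0) ∧ (∀ X ∈ M.TM, K.g (K.phi H) (M.F X) = 0)

end SubmK

end Preamble

namespace Subm

variable {C V : Type*} [CommRing C] [AddCommGroup V] [Module C V]
  {S : ACMS C V}

theorem eq_zero_of_mem_of_forall_g_eq_zero (M : Subm S) {v : V} (hv : v ∈ M.TM)
    (horth : ∀ w ∈ M.TM, S.g v w = 0) : v = 0 := by
  refine S.g_nondeg v fun Y => ?_
  have hnor : S.g v (M.nor Y) = 0 := by rw [S.g_symm]; exact M.nor_orth Y v hv
  calc S.g v Y = S.g (M.tang Y + M.nor Y) v := by rw [M.decomp, S.g_symm]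
    _ = S.g v (M.tang Y) + S.g v (M.nor Y) := by rw [S.g_addl, S.g_symm, S.g_symm (M.nor Y)]
    _ = 0 := by rw [horth _ (M.tang_mem Y), hnor, add_zero]

end Subm

namespace SubmK

variable {C V : Type*} [CommRing C] [AddCommGroup V] [Module C V]
  {K : Kenmotsu C V} (M : SubmK K)

theorem h2_xi_eq {X : V} (hX : X ∈ M.TM) :
    M.h2 X K.xi = X - K.eta X • K.xi - M.nabM X K.xi := by
  rw [← K.kxi, M.gauss X hX K.xi M.xi_mem, add_sub_cancel_left]

theorem h2_xi_mem {X : V} (hX : X ∈ M.TM) : M.h2 X K.xi ∈ M.TM := by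
  rw [M.h2_xi_eq hX]
  exact M.TM.sub_mem (M.TM.sub_mem hX (M.TM.smul_mem _ M.xi_mem))
    (M.nabM_mem X hX K.xi M.xi_mem)

/-- `h(X, ξ)` is normal by definition and tangent because `∇̄_X ξ = X - η(X)ξ` is. -/
theorem h2_xi_eq_zero {X : V} (hX : X ∈ M.TM) : M.h2 X K.xi = 0 :=
  M.eq_zero_of_mem_of_forall_g_eq_zero (M.h2_xi_mem hX) (M.h2_nor X hX K.xi M.xi_mem)

variable {M} {H : V}

theorem TotUmb.g_xi_smul_eq_zero (humb : M.TotUmb H) {X : V} (hX : X ∈ M.TM) :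
    K.g X K.xi • H = 0 := by
  rw [← humb.2 X hX K.xi M.xi_mem, M.h2_xi_eq_zero hX]

theorem TotUmb.eq_zero (humb : M.TotUmb H) : H = 0 := by
  simpa only [← K.eta_def, K.eta_xi, one_smul] using humb.g_xi_smul_eq_zero M.xi_mem

end SubmK

theorem stmt6_general {C V : Type*} [CommRing C] [AddCommGroup V] [Module C V] (K : Kenmotsu C V) (M : SubmK K) (H : V)
    (humb : M.TotUmb H) :
    (∀ X ∈ M.TM, K.g X K.xi • H = 0) ∧ ((∃ X ∈ M.TM, K.eta X ≠ 0) → H = 0) :=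
  ⟨fun _ hX => humb.g_xi_smul_eq_zero hX, fun _ => humb.eq_zero⟩

/-- for a totally umbilical submanifold tangent to `ξ` of a Kenmotsu
manifold, `g(X, ξ) H = 0` for all tangent `X`; in particular `H = 0` (`M` is totally
geodesic) whenever some tangent `X` has `η(X) ≠ 0`. -/
theorem stmt6 {C V : Type*} [CommRing C] [Algebra ℝ C] [AddCommGroup V] [Module C V] (K : Kenmotsu C V) (M : SubmK K) (H : V)
    (humb : M.TotUmb H) :
    (∀ X ∈ M.TM, K.g X K.xi • H = 0) ∧ ((∃ X ∈ M.TM, K.eta X ≠ 0) → H = 0) :=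
  stmt6_general K M H humb
end

section
/- Let M be a slant submanifold with slant angle θ of an almost contact metric manifold, with ξ tangent to M. Then T² = cos²θ·(-I + η⊗ξ), where T is the tangential part of φ restricted to TM. -/
open Real

/-!
The slant condition says that the quadratic forms `X ↦ g(TX, TX)` and
`X ↦ cos²θ · g(φX, φX)` agree on `TM` (on `span ξ` both vanish since `φξ = 0`). Both are
symmetric and biadditive (the projection `tang` is additive because a tangent field orthogonal
to `TM` vanishes), so by polarization the bilinear forms agree. Since `φ` is
skew-adjoint and `T` is the tangential part of `φ`, `T` is skew-adjoint on `TM`, whence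
`g(T²X, Y) = -g(TX, TY) = -cos²θ · g(φX, φY) = cos²θ · g(-X + η(X)ξ, Y)` for all tangent `Y`,
and a tangent field orthogonal to `TM` vanishes.
-/

lemma eq_zero_of_two_mul_eq_zero {C : Type*} [CommRing C] [Algebra ℝ C] {a : C}
    (h : 2 * a = 0) : a = 0 := by
  have half : algebraMap ℝ C 2⁻¹ * 2 = 1 := by
    rw [← map_ofNat (algebraMap ℝ C) 2, ← map_mul]; norm_num
  linear_combination algebraMap ℝ C 2⁻¹ * h - a * half

namespace ACMS

variable {C V : Type*} [CommRing C] [AddCommGroup V] [Module C V]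
variable (S : ACMS C V)

lemma g_add_right (X Y Z : V) : S.g X (Y + Z) = S.g X Y + S.g X Z := by
  rw [S.g_symm, S.g_addl, S.g_symm Y, S.g_symm Z]

lemma g_smul_right (a : C) (X Y : V) : S.g X (a • Y) = a * S.g X Y := by
  rw [S.g_symm, S.g_smull, S.g_symm]

lemma g_neg_left (X Y : V) : S.g (-X) Y = -S.g X Y := by
  simpa using S.g_smull (-1) X Y

lemma g_sub_left (X Y Z : V) : S.g (X - Y) Z = S.g X Z - S.g Y Z := by
  rw [sub_eq_add_neg, S.g_addl, S.g_neg_left, sub_eq_add_neg]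

lemma g_zero_left (X : V) : S.g 0 X = 0 := by
  simpa using S.g_smull 0 0 X

lemma g_xi_left (X : V) : S.g S.xi X = S.eta X := by
  rw [S.g_symm, S.eta_def]

lemma g_add_add_self (X Y : V) :
    S.g (X + Y) (X + Y) = S.g X X + 2 * S.g X Y + S.g Y Y := by
  rw [S.g_addl, S.g_add_right, S.g_add_right, S.g_symm Y X]; ring

lemma g_phi_left (X Y : V) : S.g (S.phi X) Y = -S.g X (S.phi Y) := by
  have h := S.g_phiphi X (S.phi Y)
  rw [S.phi_sq, S.eta_phi, S.g_add_right, S.g_smul_right, S.g_symm _ (-Y), S.g_neg_left,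
    S.g_symm _ S.xi, S.g_xi_left, S.eta_phi, S.g_symm Y] at h
  linear_combination -h

lemma phi_smul_xi (a : C) : S.phi (a • S.xi) = 0 := by
  rw [S.phi_smul, S.phi_xi, smul_zero]

end ACMS

namespace Subm

variable {C V : Type*} [CommRing C] [AddCommGroup V] [Module C V]
variable {S : ACMS C V} (M : Subm S)

lemma eq_of_forall_g_eq {A B : V} (hA : A ∈ M.TM) (hB : B ∈ M.TM)
    (h : ∀ Y ∈ M.TM, S.g A Y = S.g B Y) : A = B := by
  have hAB : A - B ∈ M.TM := M.TM.sub_mem hA hB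
  refine sub_eq_zero.mp (S.g_nondeg _ fun Y => ?_)
  rw [← M.decomp Y, S.g_add_right, S.g_symm _ (M.nor Y), M.nor_orth Y _ hAB, add_zero,
    S.g_sub_left, h _ (M.tang_mem Y), sub_self]

lemma g_tang_left (v : V) {Y : V} (hY : Y ∈ M.TM) : S.g (M.tang v) Y = S.g v Y := by
  conv_rhs => rw [← M.decomp v]
  rw [S.g_addl, M.nor_orth v Y hY, add_zero]

lemma tang_add (u v : V) : M.tang (u + v) = M.tang u + M.tang v :=
  M.eq_of_forall_g_eq (M.tang_mem _) (M.TM.add_mem (M.tang_mem u) (M.tang_mem v))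
    fun Y hY => by simp only [S.g_addl, M.g_tang_left _ hY]

lemma T_mem (X : V) : M.T X ∈ M.TM := M.tang_mem _

lemma T_add (X Y : V) : M.T (X + Y) = M.T X + M.T Y := by
  simp only [T, S.phi_add, M.tang_add]

lemma g_T_left (X : V) {Y : V} (hY : Y ∈ M.TM) : S.g (M.T X) Y = S.g (S.phi X) Y :=
  M.g_tang_left _ hY

lemma g_T_left_eq_neg {X Y : V} (hX : X ∈ M.TM) (hY : Y ∈ M.TM) :
    S.g (M.T X) Y = -S.g X (M.T Y) := by
  rw [M.g_T_left X hY, S.g_phi_left, S.g_symm X, S.g_symm X, M.g_T_left Y hX]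

lemma g_T_T_left (X : V) {Y : V} (hY : Y ∈ M.TM) :
    S.g (M.T (M.T X)) Y = -S.g (M.T X) (M.T Y) :=
  M.g_T_left_eq_neg (M.T_mem X) hY

variable [Algebra ℝ C] {M} {θ : ℝ}

lemma IsSlantAngle.g_T_self (hM : M.IsSlantAngle θ) {X : V} (hX : X ∈ M.TM) :
    S.g (M.T X) (M.T X) = algebraMap ℝ C (cos θ ^ 2) * S.g (S.phi X) (S.phi X) := by
  by_cases hξ : X ∈ Submodule.span C {S.xi}
  · obtain ⟨a, rfl⟩ := Submodule.mem_span_singleton.mp hξ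
    rw [T, S.phi_smul_xi, M.tang_of_mem 0 M.TM.zero_mem, S.g_zero_left, mul_zero]
  · exact hM.2 X hX hξ

lemma IsSlantAngle.g_T_T (hM : M.IsSlantAngle θ) {X Y : V} (hX : X ∈ M.TM)
    (hY : Y ∈ M.TM) :
    S.g (M.T X) (M.T Y) = algebraMap ℝ C (cos θ ^ 2) * S.g (S.phi X) (S.phi Y) := by
  have hXY := hM.g_T_self (M.TM.add_mem hX hY)
  rw [M.T_add, S.phi_add, S.g_add_add_self, S.g_add_add_self, hM.g_T_self hX,
    hM.g_T_self hY] at hXY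
  exact sub_eq_zero.mp <| eq_zero_of_two_mul_eq_zero <| by linear_combination hXY

end Subm

/-- a slant submanifold with slant angle `θ` satisfies
`T² = cos²θ (-I + η ⊗ ξ)`. -/
theorem stmt7 {C V : Type*} [CommRing C] [Algebra ℝ C] [AddCommGroup V] [Module C V] (S : ACMS C V) (M : Subm S) (θ : ℝ)
    (hslant : M.IsSlantAngle θ) :
    M.SlantT2 θ := by
  intro X hX
  have hrhs : -X + S.eta X • S.xi ∈ M.TM :=
    M.TM.add_mem (M.TM.neg_mem hX) (M.TM.smul_mem _ M.xi_mem)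
  refine M.eq_of_forall_g_eq (M.T_mem _) (M.TM.smul_mem _ hrhs) fun Y hY => ?_
  rw [M.g_T_T_left X hY, hslant.g_T_T hX hY, S.g_phiphi, S.g_smull, S.g_addl, S.g_neg_left,
    S.g_smull, S.g_xi_left]
  ring
end

section
/- Let M be a totally umbilical proper slant submanifold of a Kenmotsu manifold with mean curvature vector H lying in the invariant normal subbundle μ. Then for all X, Y tangent to M, g(∇⊥_X FY, φH) = g(X, Y)‖H‖². -/
open Real

/-!
The Weingarten formula turns `g(∇⊥_X FY, φH)` into `g(∇̄_X FY, φH) = -g(FY, ∇̄_X φH)`, and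
since `H` is normal to `X` and `ξ` the Kenmotsu formula gives `∇̄_X φH = φ ∇̄_X H`. Splitting
`FY = φY - TY`, the `TY`-part is `g(X, TY) g(H, φH) = 0` by umbilicity, while the `φY`-part is
`g(Y, ∇̄_X H) = -g(h(X, Y), H) = -g(X, Y)‖H‖²`, because `∇̄_X H` has no `ξ`-component.
-/

section

variable {C V : Type*} [CommRing C] [AddCommGroup V] [Module C V]

namespace ACMS
variable (S : ACMS C V)

lemma g_neg_right (X Y : V) : S.g X (-Y) = -S.g X Y := by
  rw [S.g_symm, S.g_neg_left, S.g_symm]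

lemma g_sub_right (X Y Z : V) : S.g X (Y - Z) = S.g X Y - S.g X Z := by
  rw [S.g_symm, S.g_sub_left, S.g_symm Y, S.g_symm Z]

lemma g_zero_right (X : V) : S.g X 0 = 0 := by
  rw [S.g_symm, S.g_zero_left]

lemma g_phi_right (X Y : V) : S.g X (S.phi Y) = -S.g (S.phi X) Y := by
  have h := S.g_phiphi X (S.phi Y)
  rw [S.eta_phi, mul_zero, sub_zero, S.phi_sq, S.g_add_right, S.g_neg_right, S.g_smul_right,
    ← S.eta_def, S.eta_phi, mul_zero, add_zero] at h
  exact h.symm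

lemma g_phi_self_right [Algebra ℝ C] (X : V) : S.g X (S.phi X) = 0 := by
  have h2 : IsUnit (2 : C) := by
    rw [← map_ofNat (algebraMap ℝ C) 2]
    exact (isUnit_iff_ne_zero.mpr two_ne_zero).map _
  refine h2.mul_right_eq_zero.mp ?_
  linear_combination S.g_phi_right X X - S.g_symm (S.phi X) X

end ACMS

namespace Kenmotsu
variable (K : Kenmotsu C V)

lemma D_zero (X : V) : K.D X 0 = 0 := by
  simpa [K.g_zero_left, K.g_zero_right] using K.compat X 0 0

lemma g_nab_left_of_g_eq_zero {X Y Z : V} (h : K.g Y Z = 0) :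
    K.g (K.nab X Y) Z = -K.g Y (K.nab X Z) := by
  have hc := K.compat X Y Z
  rw [h, K.D_zero] at hc
  exact eq_neg_of_add_eq_zero_left hc.symm

lemma nab_phi_of_g_eq_zero {X N : V} (hX : K.g X (K.phi N) = 0) (hξ : K.g N K.xi = 0) :
    K.nab X (K.phi N) = K.phi (K.nab X N) := by
  have hφX : K.g (K.phi X) N = 0 := by rw [← neg_eq_zero, ← K.g_phi_right, hX]
  rw [K.kphi, hφX, K.eta_def, hξ, zero_smul, zero_smul, add_zero, sub_zero]

lemma g_nab_xi_of_g_eq_zero {X N : V} (hX : K.g N X = 0) (hξ : K.g N K.xi = 0) :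
    K.g (K.nab X N) K.xi = 0 := by
  rw [K.g_nab_left_of_g_eq_zero hξ, K.kxi, K.g_sub_right, K.g_smul_right, hX, hξ]
  simp

end Kenmotsu

namespace SubmK
variable {K : Kenmotsu C V} (M : SubmK K)

lemma F_eq_phi_sub_T (X : V) : M.F X = K.phi X - M.T X :=
  eq_sub_of_add_eq' (M.decomp (K.phi X))

lemma g_nab_eq_g_nabp {X N W : V} (hX : X ∈ M.TM) (hN : ∀ w ∈ M.TM, K.g N w = 0)
    (hW : ∀ w ∈ M.TM, K.g W w = 0) : K.g (K.nab X N) W = K.g (M.nabp X N) W := by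
  rw [M.wein X hX N hN, K.g_addl, K.g_neg_left, K.g_symm (M.A N X), hW _ (M.A_mem N X hX),
    neg_zero, zero_add]

lemma TotUmb.g_nab_normal {M : SubmK K} {H X Y N : V} (humb : M.TotUmb H) (hX : X ∈ M.TM)
    (hY : Y ∈ M.TM) (hN : ∀ w ∈ M.TM, K.g N w = 0) :
    K.g Y (K.nab X N) = -(K.g X Y * K.g H N) := by
  have h := K.g_nab_left_of_g_eq_zero (X := X) (by rw [K.g_symm]; exact hN Y hY)
  rw [M.gauss X hX Y hY, K.g_addl, K.g_symm (M.nabM X Y), hN _ (M.nabM_mem X hX Y hY),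
    humb.2 X hX Y hY, K.g_smull, zero_add] at h
  rw [h, neg_neg]

end SubmK

end

theorem stmt15_general {C V : Type*} [CommRing C] [Algebra ℝ C] [AddCommGroup V] [Module C V] (K : Kenmotsu C V) (M : SubmK K) (H : V)
    (humb : M.TotUmb H)
    (hmu : M.InMu H) :
    ∀ X ∈ M.TM, ∀ Y ∈ M.TM,
      K.g (M.nabp X (M.F Y)) (K.phi H) = K.g X Y * K.g H H := by
  obtain ⟨hH, -, hφH, hφH_F⟩ := hmu
  intro X hX Y hY
  have hHξ : K.g H K.xi = 0 := hH _ M.xi_mem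
  have hTY : M.T Y ∈ M.TM := M.tang_mem _
  have hnab_φH : K.nab X (K.phi H) = K.phi (K.nab X H) :=
    K.nab_phi_of_g_eq_zero (by rw [K.g_symm]; exact hφH X hX) hHξ
  have hTY_part : K.g (M.T Y) (K.nab X (K.phi H)) = 0 := by
    rw [humb.g_nab_normal hX hTY hφH, K.g_phi_self_right, mul_zero, neg_zero]
  calc K.g (M.nabp X (M.F Y)) (K.phi H)
      = K.g (K.nab X (M.F Y)) (K.phi H) :=
        (M.g_nab_eq_g_nabp hX (M.nor_orth _) hφH).symm
    _ = -(K.g (K.phi Y) (K.phi (K.nab X H)) - K.g (M.T Y) (K.nab X (K.phi H))) := by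
        rw [K.g_nab_left_of_g_eq_zero (by rw [K.g_symm]; exact hφH_F Y hY), M.F_eq_phi_sub_T,
          K.g_sub_left, hnab_φH]
    _ = -K.g Y (K.nab X H) := by
        rw [hTY_part, K.g_phiphi, K.eta_def (K.nab X H), K.g_nab_xi_of_g_eq_zero (hH X hX) hHξ]
        ring
    _ = K.g X Y * K.g H H := by rw [humb.g_nab_normal hX hY hH, neg_neg]

/-- for a totally umbilical proper slant submanifold with `H ∈ Γ(μ)`,
`g(∇⊥_X FY, φH) = g(X, Y)‖H‖²`. -/
theorem stmt15 {C V : Type*} [CommRing C] [Algebra ℝ C] [AddCommGroup V] [Module C V] (K : Kenmotsu C V) (M : SubmK K) (θ : ℝ) (H : V)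
    (hθ : θ ∈ Set.Ioo 0 (π / 2)) (hslant : M.SlantT2 θ) (humb : M.TotUmb H)
    (hmu : M.InMu H) :
    ∀ X ∈ M.TM, ∀ Y ∈ M.TM,
      K.g (M.nabp X (M.F Y)) (K.phi H) = K.g X Y * K.g H H :=
  stmt15_general K M H humb hmu
end
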